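/- arXiv:1208.3555 — 2 statements merged into one kernel-verified Lean document; each statement's English description precedes it below -/
import Mathlib

section
/- Let g: ℝ^p → ℝ be concave and twice continuously differentiable, let A ⊆ {1,…,p}, a > 2, λ > 0. Let β̂ satisfy β̂ᵢ = 0 for i ∉ A, ∇g(β̂)ᵢ = 0 for i ∈ A, |β̂ᵢ| > aλ for all i ∈ A, and |∇g(β̂)ᵢ| ≤ λ for all i ∉ A. Then β̂ is a local maximizer of β ↦ g(β) - Σᵢ P_λ(|βᵢ|), where P_λ is the SCAD penalty. -/
/-!
By concavity, `g β ≤ g β̂ + ∇g(β̂)·(β - β̂)`; since the gradient vanishes on `A` and is at most `λ`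
in absolute value off `A`, the gain in `g` is at most `λ ∑_{i ∉ A} |βᵢ|`. Near `β̂` the coordinates
in `A` stay beyond `aλ`, where `P_λ` is flat, and those off `A` stay below `λ`, where
`P_λ(t) = λt`; so the penalty grows by exactly `λ ∑_{i ∉ A} |βᵢ|`, which cancels that gain.
-/

open Finset

/-- The SCAD penalty derivative. -/
noncomputable def scadDeriv (lam a t : ℝ) : ℝ :=
  if t ≤ lam then lam else max (a * lam - t) 0 / (a - 1)

/-- The SCAD penalty `P_λ(t) = ∫₀ᵗ P'_λ(s) ds`. -/
noncomputable def scadPenalty (lam a t : ℝ) : ℝ := ∫ s in (0:ℝ)..t, scadDeriv lam a s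

open Filter Topology

theorem ConcaveOn.le_add_of_hasFDerivAt {E : Type*} [NormedAddCommGroup E] [NormedSpace ℝ E]
    {s : Set E} {g : E → ℝ} {L : E →L[ℝ] ℝ} {x y : E} (hg : ConcaveOn ℝ s g)
    (hx : x ∈ s) (hy : y ∈ s) (hL : HasFDerivAt g L x) :
    g y ≤ g x + L (y - x) := by
  set φ : ℝ → ℝ := g ∘ AffineMap.lineMap x y
  have hφ : HasDerivAt φ (L (y - x)) 0 := by
    have hline : HasDerivAt (AffineMap.lineMap x y : ℝ → E) (y - x) 0 :=
      AffineMap.hasDerivAt_lineMap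
    exact hL.comp_hasDerivAt_of_eq 0 hline (by simp)
  have hslope := (hg.comp_affineMap (AffineMap.lineMap x y)).slope_le_of_hasDerivAt
    (by simpa using hx) (by simpa using hy) one_pos hφ
  simp only [slope_def_field, Function.comp_apply, AffineMap.lineMap_apply_zero,
    AffineMap.lineMap_apply_one, sub_zero, div_one] at hslope
  linarith

theorem ContinuousLinearMap.apply_eq_sum_mul_single {ι : Type*} [Fintype ι] [DecidableEq ι]
    (L : (ι → ℝ) →L[ℝ] ℝ) (v : ι → ℝ) :
    L v = ∑ i, v i * L (Pi.single i 1) := by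
  conv_lhs => rw [← univ_sum_single v]
  simp only [map_sum]
  refine sum_congr rfl fun i _ => ?_
  rw [← smul_eq_mul, ← map_smul, ← Pi.single_smul', smul_eq_mul, mul_one]

theorem ContinuousLinearMap.apply_le_sum_compl_mul_abs {ι : Type*} [Fintype ι]
    [DecidableEq ι] (L : (ι → ℝ) →L[ℝ] ℝ) {A : Finset ι} {lam : ℝ}
    (hA : ∀ i ∈ A, L (Pi.single i 1) = 0) (hAc : ∀ i ∉ A, |L (Pi.single i 1)| ≤ lam)
    (v : ι → ℝ) :
    L v ≤ ∑ i ∈ Aᶜ, lam * |v i| := by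
  rw [L.apply_eq_sum_mul_single, ← sum_add_sum_compl A,
    sum_eq_zero fun i hi => by rw [hA i hi, mul_zero], zero_add]
  refine sum_le_sum fun i hi => ?_
  calc v i * L (Pi.single i 1) ≤ |v i| * |L (Pi.single i 1)| := by
        rw [← abs_mul]; exact le_abs_self _
    _ ≤ |v i| * lam := by gcongr; exact hAc i (mem_compl.mp hi)
    _ = lam * |v i| := mul_comm _ _

theorem continuous_scadDeriv {lam a : ℝ} (ha : 1 < a) (hlam : 0 ≤ lam) :
    Continuous (scadDeriv lam a) := by
  refine Continuous.if_le continuous_const (by fun_prop) continuous_id continuous_const ?_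
  rintro t rfl
  rw [max_eq_left (by nlinarith)]
  field_simp [(sub_pos.mpr ha).ne']

theorem scadPenalty_eq_mul_of_le_lam {lam a t : ℝ} (h0 : 0 ≤ t) (ht : t ≤ lam) :
    scadPenalty lam a t = lam * t := by
  rw [scadPenalty, intervalIntegral.integral_congr (g := fun _ => lam),
    intervalIntegral.integral_const, smul_eq_mul, sub_zero, mul_comm]
  intro s hs
  rw [Set.uIcc_of_le h0] at hs
  exact if_pos (hs.2.trans ht)

theorem scadPenalty_eq_of_mul_lam_le {lam a t : ℝ} (ha : 1 < a) (hlam : 0 < lam)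
    (ht : a * lam ≤ t) :
    scadPenalty lam a t = scadPenalty lam a (a * lam) := by
  have hint := (continuous_scadDeriv ha hlam.le).intervalIntegrable (μ := MeasureTheory.volume)
  have hflat : ∫ s in (a * lam)..t, scadDeriv lam a s = 0 := by
    rw [intervalIntegral.integral_congr (g := fun _ => 0), intervalIntegral.integral_zero]
    intro s hs
    rw [Set.uIcc_of_le ht] at hs
    have hs' : lam < s := by nlinarith [hs.1]
    rw [scadDeriv, if_neg hs'.not_ge, max_eq_right (by linarith [hs.1]), zero_div]
  rw [scadPenalty, scadPenalty,
    ← intervalIntegral.integral_add_adjacent_intervals (hint 0 (a * lam)) (hint (a * lam) t),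
    hflat, add_zero]

theorem sum_scadPenalty_abs_eq {ι : Type*} [Fintype ι] [DecidableEq ι] {lam a : ℝ}
    (ha : 1 < a) (hlam : 0 < lam) {A : Finset ι} {β : ι → ℝ}
    (hA : ∀ i ∈ A, a * lam ≤ |β i|) (hAc : ∀ i ∉ A, |β i| ≤ lam) :
    ∑ i, scadPenalty lam a |β i| =
      #A * scadPenalty lam a (a * lam) + ∑ i ∈ Aᶜ, lam * |β i| := by
  rw [← sum_add_sum_compl A,
    sum_congr rfl fun i hi => scadPenalty_eq_of_mul_lam_le ha hlam (hA i hi), sum_const,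
    nsmul_eq_mul]
  congr 1
  exact sum_congr rfl fun i hi =>
    scadPenalty_eq_mul_of_le_lam (abs_nonneg _) (hAc i (mem_compl.mp hi))

theorem oracle_local_maximizer_scad_general
    (p : ℕ) (g : (Fin p → ℝ) → ℝ)
    (g' : (Fin p → ℝ) → ((Fin p → ℝ) →L[ℝ] ℝ))
    (hconc : ConcaveOn ℝ Set.univ g)
    (hderiv : ∀ β, HasFDerivAt g (g' β) β)
    (A : Finset (Fin p)) (a lam : ℝ) (ha : 2 < a) (hlam : 0 < lam)
    (βhat : Fin p → ℝ)
    (hzero : ∀ i ∉ A, βhat i = 0)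
    (hgradA : ∀ i ∈ A, g' βhat (Pi.single i 1) = 0)
    (hbig : ∀ i ∈ A, a * lam < |βhat i|)
    (hgradAc : ∀ i ∉ A, |g' βhat (Pi.single i 1)| ≤ lam) :
    ∃ ε > 0, ∀ β : Fin p → ℝ, ‖β - βhat‖ < ε →
      g β - ∑ i, scadPenalty lam a |β i| ≤ g βhat - ∑ i, scadPenalty lam a |βhat i| := by
  have hsmall : ∀ i ∉ A, |βhat i| < lam := fun i hi => by rw [hzero i hi, abs_zero]; exact hlam
  have hcoord : ∀ i, Continuous fun β : Fin p → ℝ => |β i| := fun i => (continuous_apply i).abs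
  have hnear : ∀ᶠ β in 𝓝 βhat, (∀ i ∈ A, a * lam ≤ |β i|) ∧ ∀ i ∉ A, |β i| ≤ lam :=
    ((eventually_all_finset A).2 fun i hi =>
      ((hcoord i).continuousAt.eventually_const_lt (hbig i hi)).mono fun _ => le_of_lt).and
    (eventually_all.2 fun i => eventually_imp_distrib_left.2 fun hi =>
      ((hcoord i).continuousAt.eventually_lt_const (hsmall i hi)).mono fun _ => le_of_lt)
  obtain ⟨ε, hε, hball⟩ := Metric.eventually_nhds_iff.1 hnear
  refine ⟨ε, hε, fun β hβ => ?_⟩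
  obtain ⟨hA, hAc⟩ := hball (by rwa [dist_eq_norm])
  have hshift : ∑ i ∈ Aᶜ, lam * |(β - βhat) i| = ∑ i ∈ Aᶜ, lam * |β i| :=
    sum_congr rfl fun i hi => by
      rw [Pi.sub_apply, hzero i (mem_compl.mp hi), sub_zero]
  have hhat : ∑ i ∈ Aᶜ, lam * |βhat i| = 0 :=
    sum_eq_zero fun i hi => by rw [hzero i (mem_compl.mp hi), abs_zero, mul_zero]
  have htangent :=
    hconc.le_add_of_hasFDerivAt (Set.mem_univ βhat) (Set.mem_univ β) (hderiv βhat)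
  have hlin := (g' βhat).apply_le_sum_compl_mul_abs hgradA hgradAc (β - βhat)
  rw [sum_scadPenalty_abs_eq (by linarith) hlam hA hAc,
    sum_scadPenalty_abs_eq (by linarith) hlam (fun i hi => (hbig i hi).le)
      fun i hi => (hsmall i hi).le, hhat]
  linarith

/-- if `g` is concave and `C²`, `β̂` vanishes off `A`, has gradient zero
and entries of magnitude `> aλ` on `A`, and gradient bounded by `λ` off `A`, then
`β̂` is a local maximizer of the SCAD-penalized objective `β ↦ g(β) - Σᵢ P_λ(|βᵢ|)`. -/
theorem oracle_local_maximizer_scad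
    (p : ℕ) (g : (Fin p → ℝ) → ℝ)
    (g' : (Fin p → ℝ) → ((Fin p → ℝ) →L[ℝ] ℝ))
    (hsmooth : ContDiff ℝ 2 g)
    (hconc : ConcaveOn ℝ Set.univ g)
    (hderiv : ∀ β, HasFDerivAt g (g' β) β)
    (A : Finset (Fin p)) (a lam : ℝ) (ha : 2 < a) (hlam : 0 < lam)
    (βhat : Fin p → ℝ)
    (hzero : ∀ i ∉ A, βhat i = 0)
    (hgradA : ∀ i ∈ A, g' βhat (Pi.single i 1) = 0)
    (hbig : ∀ i ∈ A, a * lam < |βhat i|)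
    (hgradAc : ∀ i ∉ A, |g' βhat (Pi.single i 1)| ≤ lam) :
    ∃ ε > 0, ∀ β : Fin p → ℝ, ‖β - βhat‖ < ε →
      g β - ∑ i, scadPenalty lam a |β i| ≤ g βhat - ∑ i, scadPenalty lam a |βhat i| :=
  oracle_local_maximizer_scad_general p g g' hconc hderiv A a lam ha hlam βhat hzero hgradA hbig
    hgradAc
end

section
/- Let B, B₀ be s×s invertible matrices and C, C₀ be m×s matrices. Set δ = ‖C B⁻¹ - C₀ B₀⁻¹‖_∞, δ₁ = ‖B⁻¹ - B₀⁻¹‖_∞, δ₂ = ‖B - B₀‖_∞, δ₃ = ‖C - C₀‖_∞, φ = ‖C₀ B₀⁻¹‖_∞, c = ‖B₀⁻¹‖_∞. Then δ ≤ δ₃δ₁ + φ(c + δ₁)δ₂ + δ₃c. Moreover, if δ₂c < 1, then δ ≤ (δ₃ + φδ₂)·c/(1 - δ₂c). -/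
open Finset

set_option maxHeartbeats 1000000

/-- Matrix operator norm induced by the vector `ℓ∞` norm: maximum absolute row sum. -/
noncomputable def rowSumNorm {m s : ℕ} (M : Matrix (Fin m) (Fin s) ℝ) : ℝ :=
  ⨆ i, ∑ j, |M i j|

lemma rowSumNorm_nonneg {m s : ℕ} (M : Matrix (Fin m) (Fin s) ℝ) : 0 ≤ rowSumNorm M :=
  Real.iSup_nonneg fun _ => Finset.sum_nonneg fun _ _ => abs_nonneg _

lemma rowSum_le_rowSumNorm {m s : ℕ} (M : Matrix (Fin m) (Fin s) ℝ) (i : Fin m) :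
    ∑ j, |M i j| ≤ rowSumNorm M := by
  unfold rowSumNorm
  exact le_ciSup (Set.Finite.bddAbove (Set.finite_range fun i => ∑ j, |M i j|)) i

lemma rowSumNorm_le {m s : ℕ} (M : Matrix (Fin m) (Fin s) ℝ) {a : ℝ} (ha : 0 ≤ a)
    (h : ∀ i, ∑ j, |M i j| ≤ a) : rowSumNorm M ≤ a :=
  Real.iSup_le h ha

lemma rowSumNorm_add_le {m s : ℕ} (A B : Matrix (Fin m) (Fin s) ℝ) :
    rowSumNorm (A + B) ≤ rowSumNorm A + rowSumNorm B := by
  apply rowSumNorm_le _ (add_nonneg (rowSumNorm_nonneg A) (rowSumNorm_nonneg B))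
  intro i
  calc ∑ j, |(A + B) i j| ≤ ∑ j, (|A i j| + |B i j|) :=
        Finset.sum_le_sum fun j _ => abs_add_le _ _
    _ = ∑ j, |A i j| + ∑ j, |B i j| := Finset.sum_add_distrib
    _ ≤ _ := add_le_add (rowSum_le_rowSumNorm A i) (rowSum_le_rowSumNorm B i)

lemma rowSumNorm_neg {m s : ℕ} (A : Matrix (Fin m) (Fin s) ℝ) :
    rowSumNorm (-A) = rowSumNorm A := by
  unfold rowSumNorm
  simp [Matrix.neg_apply]

lemma rowSumNorm_mul_le {m s t : ℕ} (A : Matrix (Fin m) (Fin s) ℝ)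
    (B : Matrix (Fin s) (Fin t) ℝ) :
    rowSumNorm (A * B) ≤ rowSumNorm A * rowSumNorm B := by
  apply rowSumNorm_le _ (mul_nonneg (rowSumNorm_nonneg A) (rowSumNorm_nonneg B))
  intro i
  calc ∑ j, |(A * B) i j| ≤ ∑ j, ∑ k, |A i k| * |B k j| := by
        apply Finset.sum_le_sum; intro j _
        rw [Matrix.mul_apply]
        calc |∑ k, A i k * B k j| ≤ ∑ k, |A i k * B k j| := Finset.abs_sum_le_sum_abs _ _
          _ = ∑ k, |A i k| * |B k j| := by simp [abs_mul]
    _ = ∑ k, |A i k| * ∑ j, |B k j| := by rw [Finset.sum_comm]; simp [Finset.mul_sum]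
    _ ≤ ∑ k, |A i k| * rowSumNorm B := Finset.sum_le_sum fun k _ =>
        mul_le_mul_of_nonneg_left (rowSum_le_rowSumNorm B k) (abs_nonneg _)
    _ = (∑ k, |A i k|) * rowSumNorm B := by rw [Finset.sum_mul]
    _ ≤ _ := mul_le_mul_of_nonneg_right (rowSum_le_rowSumNorm A i) (rowSumNorm_nonneg B)

/-- with `δ = ‖CB⁻¹ - C₀B₀⁻¹‖_∞`, `δ₁ = ‖B⁻¹ - B₀⁻¹‖_∞`,
`δ₂ = ‖B - B₀‖_∞`, `δ₃ = ‖C - C₀‖_∞`, `φ = ‖C₀B₀⁻¹‖_∞`, `c = ‖B₀⁻¹‖_∞`: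
`δ ≤ δ₃δ₁ + φ(c + δ₁)δ₂ + δ₃c`; and if `δ₂c < 1` then
`δ ≤ (δ₃ + φδ₂)c/(1 - δ₂c)`. -/
theorem block_ratio_perturbation_linfty
    (s m : ℕ) (B B₀ : Matrix (Fin s) (Fin s) ℝ) (C C₀ : Matrix (Fin m) (Fin s) ℝ)
    (hB : IsUnit B.det) (hB₀ : IsUnit B₀.det) :
    rowSumNorm (C * B⁻¹ - C₀ * B₀⁻¹) ≤
      rowSumNorm (C - C₀) * rowSumNorm (B⁻¹ - B₀⁻¹)
        + rowSumNorm (C₀ * B₀⁻¹) * (rowSumNorm B₀⁻¹ + rowSumNorm (B⁻¹ - B₀⁻¹))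
            * rowSumNorm (B - B₀)
        + rowSumNorm (C - C₀) * rowSumNorm B₀⁻¹ ∧
    (rowSumNorm (B - B₀) * rowSumNorm B₀⁻¹ < 1 →
      rowSumNorm (C * B⁻¹ - C₀ * B₀⁻¹) ≤
        (rowSumNorm (C - C₀) + rowSumNorm (C₀ * B₀⁻¹) * rowSumNorm (B - B₀))
          * rowSumNorm B₀⁻¹ / (1 - rowSumNorm (B - B₀) * rowSumNorm B₀⁻¹)) := by
  have h1 : B * B⁻¹ = 1 := Matrix.mul_nonsing_inv B hB
  have h2 : B₀⁻¹ * B₀ = 1 := Matrix.nonsing_inv_mul B₀ hB₀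
  have h3 : B₀⁻¹ * (B₀ * B⁻¹) = B⁻¹ := by rw [← Matrix.mul_assoc, h2, Matrix.one_mul]
  have key : C * B⁻¹ - C₀ * B₀⁻¹ =
      (C - C₀) * (B⁻¹ - B₀⁻¹) + C₀ * B₀⁻¹ * (B₀ - B) * B⁻¹ + (C - C₀) * B₀⁻¹ := by
    simp only [Matrix.sub_mul, Matrix.mul_sub, Matrix.mul_assoc, h1, h3, Matrix.mul_one]
    abel
  have key1 : B⁻¹ - B₀⁻¹ = B₀⁻¹ * (B₀ - B) * B⁻¹ := by
    simp only [Matrix.sub_mul, Matrix.mul_sub, Matrix.mul_assoc, h1, h3, Matrix.mul_one]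
  set d := rowSumNorm (C * B⁻¹ - C₀ * B₀⁻¹) with hd
  set d1 := rowSumNorm (B⁻¹ - B₀⁻¹) with hd1
  set d2 := rowSumNorm (B - B₀) with hd2
  set d3 := rowSumNorm (C - C₀) with hd3
  set phi := rowSumNorm (C₀ * B₀⁻¹) with hphi
  set c := rowSumNorm B₀⁻¹ with hc
  set binv := rowSumNorm (B⁻¹) with hbinv
  have hsub : rowSumNorm (B₀ - B) = d2 := by rw [← rowSumNorm_neg, neg_sub]
  have hbinv_le : binv ≤ d1 + c := by
    have : B⁻¹ = (B⁻¹ - B₀⁻¹) + B₀⁻¹ := by abel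
    calc binv = rowSumNorm ((B⁻¹ - B₀⁻¹) + B₀⁻¹) := by rw [hbinv, ← this]
      _ ≤ d1 + c := rowSumNorm_add_le _ _
  have hT1 : rowSumNorm ((C - C₀) * (B⁻¹ - B₀⁻¹)) ≤ d3 * d1 := rowSumNorm_mul_le _ _
  have hT2 : rowSumNorm (C₀ * B₀⁻¹ * (B₀ - B) * B⁻¹) ≤ phi * d2 * binv := by
    calc rowSumNorm (C₀ * B₀⁻¹ * (B₀ - B) * B⁻¹)
        ≤ rowSumNorm (C₀ * B₀⁻¹ * (B₀ - B)) * binv := rowSumNorm_mul_le _ _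
      _ ≤ phi * rowSumNorm (B₀ - B) * binv := by
          apply mul_le_mul_of_nonneg_right (rowSumNorm_mul_le _ _) (rowSumNorm_nonneg _)
      _ = phi * d2 * binv := by rw [hsub]
  have hT3 : rowSumNorm ((C - C₀) * B₀⁻¹) ≤ d3 * c := rowSumNorm_mul_le _ _
  have hd_le : d ≤ rowSumNorm ((C - C₀) * (B⁻¹ - B₀⁻¹))
      + rowSumNorm (C₀ * B₀⁻¹ * (B₀ - B) * B⁻¹) + rowSumNorm ((C - C₀) * B₀⁻¹) := by
    rw [hd, key]
    calc rowSumNorm _ ≤ rowSumNorm ((C - C₀) * (B⁻¹ - B₀⁻¹) + C₀ * B₀⁻¹ * (B₀ - B) * B⁻¹)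
          + rowSumNorm ((C - C₀) * B₀⁻¹) := rowSumNorm_add_le _ _
      _ ≤ _ := by
          gcongr
          exact rowSumNorm_add_le _ _
  have hd1_le : d1 ≤ c * d2 * binv := by
    calc d1 = rowSumNorm (B₀⁻¹ * (B₀ - B) * B⁻¹) := by rw [hd1, key1]
      _ ≤ rowSumNorm (B₀⁻¹ * (B₀ - B)) * binv := rowSumNorm_mul_le _ _
      _ ≤ c * rowSumNorm (B₀ - B) * binv := by
          apply mul_le_mul_of_nonneg_right (rowSumNorm_mul_le _ _) (rowSumNorm_nonneg _)
      _ = c * d2 * binv := by rw [hsub]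
  have hd1n : 0 ≤ d1 := rowSumNorm_nonneg _
  have hd2n : 0 ≤ d2 := rowSumNorm_nonneg _
  have hd3n : 0 ≤ d3 := rowSumNorm_nonneg _
  have hphin : 0 ≤ phi := rowSumNorm_nonneg _
  have hcn : 0 ≤ c := rowSumNorm_nonneg _
  have part1 : d ≤ d3 * d1 + phi * (c + d1) * d2 + d3 * c := by
    have hbn : 0 ≤ binv := rowSumNorm_nonneg _
    nlinarith [mul_le_mul_of_nonneg_left hbinv_le (mul_nonneg hphin hd2n)]
  refine ⟨part1, fun h => ?_⟩
  have hpos : 0 < 1 - d2 * c := by linarith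
  rw [le_div_iff₀ hpos]
  -- d ≤ (d3 + phi*d2)*(c + d1) and (c + d1)*(1 - d2*c) ≤ c
  have hbn : 0 ≤ binv := rowSumNorm_nonneg _
  have hkey : d1 * (1 - d2 * c) ≤ c * c * d2 := by
    nlinarith [hd1_le, hbinv_le, mul_le_mul_of_nonneg_left hbinv_le (mul_nonneg hcn hd2n)]
  nlinarith [part1, mul_nonneg hd3n hd1n, mul_nonneg hphin hd2n,
    mul_le_mul_of_nonneg_left hkey (add_nonneg hd3n (mul_nonneg hphin hd2n))]
end
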